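/- arXiv:1601.02270 — 2 statements merged into one kernel-verified Lean document; each statement's English description precedes it below -/
import Mathlib

section
/- In a proper *-ring A (not necessarily unital), a projection p (p = p^2 = p^*) and an element a ∈ A_+ with p = pa satisfy a − p ∈ A_+. -/
open Pointwise

/-- Finite sums of elements of the form `star a * a`. -/
def sSums (A : Type*) [Ring A] [StarRing A] : Set A :=
  (AddSubmonoid.closure {x : A | ∃ a : A, x = star a * a} : Set A)

/-- The *-positive elements. -/
def pos (A : Type*) [Ring A] [StarRing A] : Set A :=
  {a : A | ∃ n : ℕ, 0 < n ∧ n • a ∈ sSums A}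

/-- The *-accretive elements. -/
def accr (A : Type*) [Ring A] [StarRing A] : Set A :=
  {a : A | a + star a ∈ pos A}

/-- The order `a ⪯ b ⟺ b - a ∈ 𝔯`. -/
def ple {A : Type*} [Ring A] [StarRing A] (a b : A) : Prop := b - a ∈ accr A

/-- The cone `𝔠`. -/
def cone (A : Type*) [Ring A] [StarRing A] : Set A :=
  {a : A | ∃ n : ℕ, 0 < n ∧ ple (star a * a) (n • a)}

/-- The ball `𝔅`. -/
def ball (A : Type*) [Ring A] [StarRing A] : Set A :=
  {a : A | ple (star a * a) 1}

/-! Write `n • a = s ∈ A_Σ`. Since `p s = n p` and `s` is self-adjoint, also `s p = n p`, so compressing `s`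
by the projection `1 - p` gives `(1 - p) s (1 - p) = s - n p = n (a - p)`; compressions of sums of squares
are sums of squares. -/

section SumsOfSquares

variable {A : Type*} [Ring A] [StarRing A]

lemma isSelfAdjoint_of_mem_sSums {x : A} (hx : x ∈ sSums A) : IsSelfAdjoint x := by
  induction hx using AddSubmonoid.closure_induction with
  | mem y hy => obtain ⟨b, rfl⟩ := hy; exact IsSelfAdjoint.star_mul_self b
  | zero => exact IsSelfAdjoint.zero A
  | add y z _ _ hy hz => exact hy.add hz

lemma star_mul_mul_mem_sSums {x : A} (hx : x ∈ sSums A) (c : A) : star c * x * c ∈ sSums A := by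
  induction hx using AddSubmonoid.closure_induction with
  | mem y hy =>
    obtain ⟨b, rfl⟩ := hy
    exact AddSubmonoid.subset_closure ⟨b * c, by simp only [star_mul, mul_assoc]⟩
  | zero => rw [mul_zero, zero_mul]; exact zero_mem (AddSubmonoid.closure _)
  | add y z _ _ hy hz => rw [mul_add, add_mul]; exact (AddSubmonoid.closure _).add_mem hy hz

end SumsOfSquares

lemma IsStarProjection.one_sub_mul_mul_one_sub {R : Type*} [Ring R] [StarRing R] {p s : R}
    (hp : IsStarProjection p) (hs : IsSelfAdjoint s) {n : ℕ} (hps : p * s = n • p) :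
    (1 - p) * s * (1 - p) = s - n • p := by
  have hsp : s * p = n • p := by
    simpa only [star_mul, hs.star_eq, hp.isSelfAdjoint.star_eq, star_nsmul] using congrArg star hps
  calc (1 - p) * s * (1 - p) = s - p * s - s * p + p * s * p := by noncomm_ring
    _ = s - n • p := by rw [hps, hsp, smul_mul_assoc, hp.isIdempotentElem.eq]; abel

theorem stmt14_general {A : Type*} [Ring A] [StarRing A]
    (p a : A) (hp : p * p = p) (hp' : star p = p)
    (ha : a ∈ pos A) (h : p = p * a) : a - p ∈ pos A := by
  obtain ⟨n, hn, hs⟩ := ha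
  have hproj : IsStarProjection p := ⟨hp, hp'⟩
  have hproj' : IsStarProjection (1 - p) := hproj.one_sub
  have hps : p * (n • a) = n • p := by rw [mul_smul_comm, ← h]
  refine ⟨n, hn, ?_⟩
  have hcompress := star_mul_mul_mem_sSums hs (1 - p)
  rwa [hproj'.isSelfAdjoint.star_eq,
    hproj.one_sub_mul_mul_one_sub (isSelfAdjoint_of_mem_sSums hs) hps, ← smul_sub] at hcompress

theorem stmt14 {A : Type*} [Ring A] [StarRing A]
    (proper : ∀ a : A, star a * a = 0 → a = 0)
    (salient : sSums A ∩ (-sSums A) = {0})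
    (p a : A) (hp : p * p = p) (hp' : star p = p)
    (ha : a ∈ pos A) (h : p = p * a) : a - p ∈ pos A :=
  stmt14_general p a hp hp' ha h
end

section
/- In a proper unital *-ring A with A_Σ salient and satisfying A_+A_+ ∩ A_sa ⊆ A_+, decompositions are unique: if a,b,c,d ∈ A_+ with ab = 0, cd = 0, and a − b = c − d, then a = c and b = d. -/
open Pointwise

/-! If `a - b = c - d` are two orthogonal decompositions, put `e = a - c = b - d`. Since `ab = cd = 0`,
`e * e = (a - c) * (b - d) = -((a + c) * (b + d))`. Thus `x = (a + c) * (b + d)` is self-adjoint, hence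
positive as a product of positive elements, while `-x = e^* e` is positive too. Salience forces `x = 0`,
and properness then gives `e = 0`. -/

section PositiveCone

variable {A : Type*} [Ring A] [StarRing A]

lemma star_mul_self_mem_sSums (x : A) : star x * x ∈ sSums A :=
  AddSubmonoid.subset_closure ⟨x, rfl⟩

lemma nsmul_mem_sSums {s : A} (hs : s ∈ sSums A) (n : ℕ) : n • s ∈ sSums A :=
  nsmul_mem (show s ∈ AddSubmonoid.closure _ from hs) n

lemma isSelfAdjoint_of_mem_sSums_s17 {s : A} (hs : s ∈ sSums A) : IsSelfAdjoint s := by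
  induction hs using AddSubmonoid.closure_induction with
  | mem x hx => obtain ⟨a, rfl⟩ := hx; exact IsSelfAdjoint.star_mul_self a
  | zero => exact IsSelfAdjoint.zero A
  | add x y _ _ hx hy => exact hx.add hy

lemma mem_pos_of_mem_sSums {s : A} (hs : s ∈ sSums A) : s ∈ pos A :=
  ⟨1, Nat.one_pos, by rwa [one_smul]⟩

lemma add_mem_pos {a b : A} (ha : a ∈ pos A) (hb : b ∈ pos A) : a + b ∈ pos A := by
  obtain ⟨n, hn, hna⟩ := ha
  obtain ⟨m, hm, hmb⟩ := hb
  refine ⟨m * n, Nat.mul_pos hm hn, ?_⟩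
  rw [smul_add, mul_smul, mul_comm, mul_smul]
  exact AddSubmonoid.add_mem _ (nsmul_mem_sSums hna m) (nsmul_mem_sSums hmb n)

lemma eq_zero_of_mem_sSums_of_neg_mem_sSums (salient : sSums A ∩ (-sSums A) = {0})
    {s : A} (hs : s ∈ sSums A) (hs' : -s ∈ sSums A) : s = 0 := by
  have hmem : s ∈ sSums A ∩ (-sSums A) := ⟨hs, hs'⟩
  rwa [salient] at hmem

lemma eq_zero_of_nsmul_eq_zero_of_mem_sSums (salient : sSums A ∩ (-sSums A) = {0})
    {s : A} (hs : s ∈ sSums A) {n : ℕ} (hn : 0 < n) (h : n • s = 0) : s = 0 := by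
  obtain ⟨k, rfl⟩ := Nat.exists_eq_add_one_of_ne_zero hn.ne'
  rw [succ_nsmul] at h
  refine eq_zero_of_mem_sSums_of_neg_mem_sSums salient hs ?_
  rw [neg_eq_of_add_eq_zero_left h]
  exact nsmul_mem_sSums hs k

lemma eq_zero_of_nsmul_eq_zero (proper : ∀ a : A, star a * a = 0 → a = 0)
    (salient : sSums A ∩ (-sSums A) = {0}) {x : A} {n : ℕ} (hn : 0 < n) (h : n • x = 0) :
    x = 0 := by
  refine proper x (eq_zero_of_nsmul_eq_zero_of_mem_sSums salient (star_mul_self_mem_sSums x) hn ?_)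
  rw [← mul_smul_comm, h, mul_zero]

lemma isSelfAdjoint_of_mem_pos (proper : ∀ a : A, star a * a = 0 → a = 0)
    (salient : sSums A ∩ (-sSums A) = {0}) {a : A} (ha : a ∈ pos A) : IsSelfAdjoint a := by
  obtain ⟨n, hn, hna⟩ := ha
  have hstar : n • star a = n • a := by
    rw [← star_nsmul]; exact (isSelfAdjoint_of_mem_sSums_s17 hna).star_eq
  refine sub_eq_zero.mp (eq_zero_of_nsmul_eq_zero proper salient hn ?_)
  rw [smul_sub, hstar, sub_self]

lemma eq_zero_of_mem_pos_of_neg_mem_pos (proper : ∀ a : A, star a * a = 0 → a = 0)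
    (salient : sSums A ∩ (-sSums A) = {0}) {a : A} (ha : a ∈ pos A) (ha' : -a ∈ pos A) :
    a = 0 := by
  obtain ⟨n, hn, hna⟩ := ha
  obtain ⟨m, hm, hma⟩ := ha'
  refine eq_zero_of_nsmul_eq_zero proper salient (Nat.mul_pos hn hm) ?_
  refine eq_zero_of_mem_sSums_of_neg_mem_sSums salient ?_ ?_
  · rw [mul_comm, mul_smul]; exact nsmul_mem_sSums hna m
  · rw [← smul_neg, mul_smul]; exact nsmul_mem_sSums hma n

end PositiveCone

lemma sub_mul_sub_eq_neg_add_mul_add {R : Type*} [Ring R] {a b c d : R} (hab : a * b = 0)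
    (hcd : c * d = 0) : (a - c) * (b - d) = -((a + c) * (b + d)) := by
  rw [eq_neg_iff_add_eq_zero]
  calc (a - c) * (b - d) + (a + c) * (b + d) = 2 * (a * b) + 2 * (c * d) := by noncomm_ring
    _ = 0 := by rw [hab, hcd, mul_zero, add_zero]

theorem stmt17 {A : Type*} [Ring A] [StarRing A]
    (proper : ∀ a : A, star a * a = 0 → a = 0)
    (salient : sSums A ∩ (-sSums A) = {0})
    (posmul : ∀ x : A, (∃ a ∈ pos A, ∃ b ∈ pos A, x = a * b) → star x = x → x ∈ pos A)
    (a b c d : A) (ha : a ∈ pos A) (hb : b ∈ pos A) (hc : c ∈ pos A)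
    (hd : d ∈ pos A) (hab : a * b = 0) (hcd : c * d = 0)
    (hdec : a - b = c - d) : a = c ∧ b = d := by
  have hbd : b - d = a - c := (sub_eq_sub_iff_sub_eq_sub.mp hdec).symm
  have he : IsSelfAdjoint (a - c) :=
    (isSelfAdjoint_of_mem_pos proper salient ha).sub (isSelfAdjoint_of_mem_pos proper salient hc)
  have hsq : star (a - c) * (a - c) = -((a + c) * (b + d)) := by
    rw [he.star_eq, ← sub_mul_sub_eq_neg_add_mul_add hab hcd, hbd]
  have hx : IsSelfAdjoint ((a + c) * (b + d)) := by
    rw [← neg_neg ((a + c) * (b + d)), ← hsq]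
    exact (IsSelfAdjoint.star_mul_self (a - c)).neg
  have hx_pos : (a + c) * (b + d) ∈ pos A :=
    posmul _ ⟨a + c, add_mem_pos ha hc, b + d, add_mem_pos hb hd, rfl⟩ hx.star_eq
  have hx_neg_pos : -((a + c) * (b + d)) ∈ pos A :=
    hsq ▸ mem_pos_of_mem_sSums (star_mul_self_mem_sSums (a - c))
  have hx0 := eq_zero_of_mem_pos_of_neg_mem_pos proper salient hx_pos hx_neg_pos
  have he0 : a - c = 0 := proper _ (by rw [hsq, hx0, neg_zero])
  exact ⟨sub_eq_zero.mp he0, sub_eq_zero.mp (hbd.trans he0)⟩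
end
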